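/- arXiv:1808.10321 — 4 statements merged into one kernel-verified Lean document; each statement's English description precedes it below -/
import Mathlib

section
/- Let L be a positive definite unimodular lattice and w ∈ L. Then w is extremal (i.e., w has minimal norm in its coset w + 2L) if and only if for all u ∈ L with u·u < (w·w)/2 we have |u·w| ≤ u·u. -/
/-!
If `w` is extremal, expanding `(w ± 2u)·(w ± 2u) ≥ w·w` gives `|u·w| ≤ u·u` for every `u`.
Conversely, if `w` is not extremal, let `v` be a vector of least norm in `w + 2L` and write
`w = v + 2u`. With `a = u·u`, `b = u·v`, `c = v·v`, extremality of `v` gives `b ≥ -a`, and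
`c < w·w = c + 4b + 4a` gives `a + b > 0`. Then `u + v` (if `c < 2a`) or `u` (if `c ≥ 2a`) is a
vector of norm below `(w·w)/2` whose product with `w` exceeds its norm.
-/

namespace LinearMap

section

variable {R L : Type*} [CommRing R] [AddCommGroup L] [Module R L]

theorem apply_add_two_smul_self {B : L →ₗ[R] L →ₗ[R] R} (hB : ∀ x y : L, B x y = B y x)
    (x u : L) : B (x + 2 • u) (x + 2 • u) = B x x + 4 * B u x + 4 * B u u := by
  simp only [map_add, map_nsmul, add_apply, smul_apply, nsmul_eq_mul, hB x u]
  push_cast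
  ring

variable [LinearOrder R]

def IsExtremal (B : L →ₗ[R] L →ₗ[R] R) (w : L) : Prop :=
  ∀ u : L, B w w ≤ B (w + 2 • u) (w + 2 • u)

def ShortVectorBound (B : L →ₗ[R] L →ₗ[R] R) (w : L) : Prop :=
  ∀ u : L, 2 * B u u < B w w → |B u w| ≤ B u u

variable [IsStrictOrderedRing R] {B : L →ₗ[R] L →ₗ[R] R}

theorem IsExtremal.abs_apply_le (hB : ∀ x y : L, B x y = B y x) {v : L} (hv : IsExtremal B v)
    (u : L) : |B u v| ≤ B u u := by
  have h₁ := hv u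
  have h₂ := hv (-u)
  rw [apply_add_two_smul_self hB] at h₁ h₂
  simp only [map_neg, neg_apply, neg_neg] at h₂
  rw [abs_le]
  constructor <;> linarith

theorem IsExtremal.shortVectorBound (hB : ∀ x y : L, B x y = B y x) {w : L}
    (hw : IsExtremal B w) : ShortVectorBound B w :=
  fun u _ ↦ hw.abs_apply_le hB u

theorem IsExtremal.not_shortVectorBound_add_two_smul (hB : ∀ x y : L, B x y = B y x) {v u : L}
    (hv : IsExtremal B v) (hlt : B v v < B (v + 2 • u) (v + 2 • u)) :
    ¬ ShortVectorBound B (v + 2 • u) := by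
  intro hbound
  have hnorm := apply_add_two_smul_self hB v u
  have hab : 0 < B u u + B u v := by linarith
  have hb : -B u u ≤ B u v := (abs_le.mp (hv.abs_apply_le hB u)).1
  have hw : ∀ y : L, B y (v + 2 • u) = B y v + 2 * B y u := fun y ↦ by
    simp [map_nsmul, nsmul_eq_mul]
  rcases lt_or_ge (B v v) (2 * B u u) with hca | hca
  · have hsq : B (u + v) (u + v) = B u u + 2 * B u v + B v v := by
      simp only [map_add, add_apply, hB v u]; ring
    have hprod : B (u + v) (v + 2 • u) = 2 * B u u + 3 * B u v + B v v := by
      rw [hw, map_add, add_apply, add_apply, hB v u]; ring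
    have := hbound (u + v) (by linarith)
    linarith [le_abs_self (B (u + v) (v + 2 • u))]
  · have := hbound u (by linarith)
    linarith [le_abs_self (B u (v + 2 • u)), hw u]

end

theorem exists_isExtremal_add_two_smul_le {L : Type*} [AddCommGroup L] [Module ℤ L]
    {B : L →ₗ[ℤ] L →ₗ[ℤ] ℤ} (hnonneg : ∀ x : L, 0 ≤ B x x)
    (w : L) : ∃ z : L, IsExtremal B (w + 2 • z) ∧
      ∀ u : L, B (w + 2 • z) (w + 2 • z) ≤ B (w + 2 • u) (w + 2 • u) := by
  obtain ⟨_, ⟨z, rfl⟩, hmin⟩ := Int.exists_least_of_bdd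
    (P := (· ∈ Set.range fun u : L ↦ B (w + 2 • u) (w + 2 • u)))
    ⟨0, by rintro _ ⟨u, rfl⟩; exact hnonneg _⟩ ⟨_, 0, rfl⟩
  refine ⟨z, fun u ↦ ?_, fun u ↦ hmin _ ⟨u, rfl⟩⟩
  simpa only [smul_add, add_assoc] using hmin _ ⟨z + u, rfl⟩

end LinearMap

open LinearMap in
theorem extremal_iff_general
    {L : Type*} [AddCommGroup L] [Module ℤ L]
    (B : L →ₗ[ℤ] L →ₗ[ℤ] ℤ)
    (hsymm : ∀ x y : L, B x y = B y x)
    (hposdef : ∀ x : L, x ≠ 0 → 0 < B x x) (w : L) :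
    (∀ u : L, B w w ≤ B (w + 2 • u) (w + 2 • u)) ↔
      (∀ u : L, 2 * B u u < B w w → |B u w| ≤ B u u) := by
  refine ⟨IsExtremal.shortVectorBound hsymm, fun hbound ↦ ?_⟩
  by_contra hnot
  obtain ⟨u, hu⟩ : ∃ u : L, B (w + 2 • u) (w + 2 • u) < B w w := by
    simpa only [not_forall, not_le] using hnot
  have hnonneg : ∀ x : L, 0 ≤ B x x := fun x ↦ by
    rcases eq_or_ne x 0 with rfl | hx
    · simp
    · exact (hposdef x hx).le
  obtain ⟨z, hv, hmin⟩ := exists_isExtremal_add_two_smul_le hnonneg w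
  have hw : w + 2 • z + 2 • -z = w := by rw [smul_neg]; abel
  refine hv.not_shortVectorBound_add_two_smul hsymm (u := -z) ?_ (by rwa [hw])
  rw [hw]
  exact (hmin u).trans_lt hu

/-- For a positive definite unimodular lattice `L` with bilinear form `B`,
`w` is extremal (minimal norm in its coset `w + 2L`) iff for all `u` with
`u·u < (w·w)/2` we have `|u·w| ≤ u·u`. -/
theorem extremal_iff
    {L : Type*} [AddCommGroup L] [Module ℤ L] [Module.Free ℤ L] [Module.Finite ℤ L]
    (B : L →ₗ[ℤ] L →ₗ[ℤ] ℤ)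
    (hsymm : ∀ x y : L, B x y = B y x)
    (hposdef : ∀ x : L, x ≠ 0 → 0 < B x x)
    (hunimodular : Function.Bijective fun x : L => B x) (w : L) :
    (∀ u : L, B w w ≤ B (w + 2 • u) (w + 2 • u)) ↔
      (∀ u : L, 2 * B u u < B w w → |B u w| ≤ B u u) :=
  extremal_iff_general B hsymm hposdef w
end

section
/- Let L be a positive definite lattice, let w ∈ L be extremal with even norm m = w·w, and for i ∈ ℤ define S_i^w = {u ∈ L : u·u = i = -u·w}. Then the map u ↦ -w - u is a bijection from S_i^w to S_{m-i}^w; in particular |S_i^w| = |S_{m-i}^w| for all i, and S_i^w is empty for i > m. -/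
/-!
Expanding `-w - u` with a symmetric form gives `(-w-u)·(-w-u) = w·w + 2 u·w + u·u` and
`(-w-u)·w = -w·w - u·w`, so the involution `u ↦ -w - u` exchanges the shells `S_i` and
`S_{m-i}`. Since norms are nonnegative, `S_{m-i}` is empty for `i > m`, hence so is `S_i`.
-/

namespace LinearMap.BilinForm

variable {R M : Type*} [CommRing R] [AddCommGroup M] [Module R M]

def negShell (B : LinearMap.BilinForm R M) (w : M) (i : R) : Set M :=
  {u | B u u = i ∧ B u w = -i}

variable {B : LinearMap.BilinForm R M}

theorem mapsTo_neg_sub_negShell (hB : B.IsSymm) (w : M) (i : R) :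
    Set.MapsTo (fun u => -w - u) (B.negShell w i) (B.negShell w (B w w - i)) := by
  rintro u ⟨hnorm, hpair⟩
  have hpair' : B w u = -i := hB.eq w u ▸ hpair
  constructor
  · simp only [map_sub, map_neg, LinearMap.sub_apply, LinearMap.neg_apply, hnorm, hpair, hpair']
    ring
  · simp only [map_sub, map_neg, LinearMap.sub_apply, LinearMap.neg_apply, hpair]
    ring

theorem bijOn_neg_sub_negShell (hB : B.IsSymm) (w : M) (i : R) :
    Set.BijOn (fun u => -w - u) (B.negShell w i) (B.negShell w (B w w - i)) := by
  have hinv : Set.InvOn (fun u => -w - u) (fun u => -w - u)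
      (B.negShell w i) (B.negShell w (B w w - i)) :=
    ⟨fun u _ => sub_sub_cancel (-w) u, fun u _ => sub_sub_cancel (-w) u⟩
  refine hinv.bijOn (mapsTo_neg_sub_negShell hB w i) ?_
  simpa only [sub_sub_cancel] using mapsTo_neg_sub_negShell hB w (B w w - i)

theorem negShell_eq_empty_of_lt [PartialOrder R] [IsOrderedAddMonoid R] (hB : B.IsSymm)
    (hnonneg : ∀ x, 0 ≤ B x x) {w : M} {i : R} (hi : B w w < i) : B.negShell w i = ∅ := by
  refine Set.eq_empty_of_forall_notMem fun u hu => ?_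
  have hnorm : B (-w - u) (-w - u) = B w w - i := (mapsTo_neg_sub_negShell hB w i hu).1
  have hle : i ≤ B w w := by simpa only [hnorm, sub_nonneg] using hnonneg (-w - u)
  exact hle.not_gt hi

end LinearMap.BilinForm

theorem S_bijection_general
    {L : Type*} [AddCommGroup L] [Module ℤ L]
    (B : L →ₗ[ℤ] L →ₗ[ℤ] ℤ)
    (hsymm : ∀ x y : L, B x y = B y x)
    (hposdef : ∀ x : L, x ≠ 0 → 0 < B x x)
    (w : L)
    (m : ℤ) (hm : m = B w w)
    (S : ℤ → Set L) (hS : S = fun i => {u : L | B u u = i ∧ B u w = -i}) :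
    (∀ i : ℤ, Set.BijOn (fun u : L => -w - u) (S i) (S (m - i))) ∧
    (∀ i : ℤ, Nat.card (S i) = Nat.card (S (m - i))) ∧
    (∀ i : ℤ, m < i → S i = ∅) := by
  subst hm hS
  have hB : LinearMap.BilinForm.IsSymm B := ⟨hsymm⟩
  have hnonneg : ∀ x, 0 ≤ B x x := fun x => by
    rcases eq_or_ne x 0 with rfl | hx
    · simp
    · exact (hposdef x hx).le
  have hbij := LinearMap.BilinForm.bijOn_neg_sub_negShell hB w
  exact ⟨hbij, fun i => Nat.card_congr ((hbij i).equiv _),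
    fun i hi => LinearMap.BilinForm.negShell_eq_empty_of_lt hB hnonneg hi⟩

/-- For a positive definite lattice `L`, extremal `w` of even norm `m`,
and `S i = {u | u·u = i = -u·w}`, the map `u ↦ -w - u` is a bijection from `S i`
onto `S (m - i)`; in particular `|S i| = |S (m - i)|` and `S i = ∅` for `i > m`. -/
theorem S_bijection
    {L : Type*} [AddCommGroup L] [Module ℤ L] [Module.Free ℤ L] [Module.Finite ℤ L]
    (B : L →ₗ[ℤ] L →ₗ[ℤ] ℤ)
    (hsymm : ∀ x y : L, B x y = B y x)
    (hposdef : ∀ x : L, x ≠ 0 → 0 < B x x)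
    (w : L)
    (hextremal : ∀ u : L, B w w ≤ B (w + 2 • u) (w + 2 • u))
    (m : ℤ) (hm : m = B w w) (hmeven : Even m)
    (S : ℤ → Set L) (hS : S = fun i => {u : L | B u u = i ∧ B u w = -i}) :
    (∀ i : ℤ, Set.BijOn (fun u : L => -w - u) (S i) (S (m - i))) ∧
    (∀ i : ℤ, Nat.card (S i) = Nat.card (S (m - i))) ∧
    (∀ i : ℤ, m < i → S i = ∅) :=
  S_bijection_general B hsymm hposdef w m hm S hS
end

section
/- Let L ⊂ ℚ^{24} be the lattice generated by D_24 = {x ∈ ℤ^{24} : Σx_i even} and the glue vector g = (1/2, …, 1/2). Then g·g = 6, g is extremal in L (minimal norm in g + 2L), and Min(g + 2L) = {g, -g}. -/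
/-- The standard inner product on `ℚ^n`. -/
def qip {n : ℕ} (x y : Fin n → ℚ) : ℚ := ∑ i, x i * y i

/-- A rational vector with all coordinates integral. -/
def isIntVec {n : ℕ} (x : Fin n → ℚ) : Prop := ∀ i, ∃ m : ℤ, x i = (m : ℚ)

/-- The root lattice `D_24` inside `ℚ^24`: integer vectors with even coordinate sum. -/
def D24set : Set (Fin 24 → ℚ) :=
  {x | isIntVec x ∧ ∃ m : ℤ, (∑ i, x i) = 2 * (m : ℚ)}

/-- The glue vector `g = (1/2, …, 1/2)`. -/
def glueD24 : Fin 24 → ℚ := fun _ => 1 / 2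

/-- The Niemeier lattice `D_24`, generated by the root lattice `D_24` and `g`. -/
def NiemeierD24 : AddSubgroup (Fin 24 → ℚ) :=
  AddSubgroup.closure (D24set ∪ {glueD24})

/-!
Write `z ∈ g + 2L` as `z = g + 2u`. Every `u ∈ L` has `2 uᵢ ∈ ℤ` and `uᵢ - uⱼ ∈ ℤ`, so every
coordinate of `z` lies in `1/2 + ℤ` and any two coordinates of `z` differ by an even integer.
A number `1/2 + m` with `m ∈ ℤ` has square `1/4 + m (m + 1) ≥ 1/4`, with equality only at `±1/2`;
hence `z·z ≥ 24/4 = 6 = g·g`, and equality forces `z` to have all coordinates `±1/2`, all with the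
same sign since `1/2 - (-1/2) = 1` is odd.
-/

def halfVec (n : ℕ) : Fin n → ℚ := fun _ => 1 / 2

/-- The lattice `ℤⁿ + ℤ (1/2, …, 1/2)`, described coordinatewise. -/
def halfIntLattice (n : ℕ) : AddSubgroup (Fin n → ℚ) where
  carrier := {u | (∀ i, ∃ m : ℤ, 2 * u i = m) ∧ ∀ i j, ∃ m : ℤ, u i - u j = m}
  add_mem' := by
    rintro a b ⟨ha₁, ha₂⟩ ⟨hb₁, hb₂⟩
    refine ⟨fun i => ?_, fun i j => ?_⟩
    · obtain ⟨m, hm⟩ := ha₁ i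
      obtain ⟨m', hm'⟩ := hb₁ i
      exact ⟨m + m', by simp only [Pi.add_apply, mul_add, hm, hm', Int.cast_add]⟩
    · obtain ⟨m, hm⟩ := ha₂ i j
      obtain ⟨m', hm'⟩ := hb₂ i j
      exact ⟨m + m', by rw [Int.cast_add, ← hm, ← hm', Pi.add_apply, Pi.add_apply]; ring⟩
  zero_mem' := ⟨fun _ => ⟨0, by simp⟩, fun _ _ => ⟨0, by simp⟩⟩
  neg_mem' := by
    rintro a ⟨ha₁, ha₂⟩
    refine ⟨fun i => ?_, fun i j => ?_⟩
    · obtain ⟨m, hm⟩ := ha₁ i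
      exact ⟨-m, by rw [Int.cast_neg, ← hm, Pi.neg_apply]; ring⟩
    · obtain ⟨m, hm⟩ := ha₂ i j
      exact ⟨-m, by rw [Int.cast_neg, ← hm, Pi.neg_apply, Pi.neg_apply]; ring⟩

lemma mem_halfIntLattice_of_isIntVec {n : ℕ} {x : Fin n → ℚ} (hx : isIntVec x) :
    x ∈ halfIntLattice n := by
  refine ⟨fun i => ?_, fun i j => ?_⟩
  · obtain ⟨m, hm⟩ := hx i
    exact ⟨2 * m, by rw [hm]; push_cast; ring⟩
  · obtain ⟨m, hm⟩ := hx i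
    obtain ⟨m', hm'⟩ := hx j
    exact ⟨m - m', by rw [hm, hm']; push_cast; ring⟩

lemma halfVec_mem_halfIntLattice (n : ℕ) : halfVec n ∈ halfIntLattice n :=
  ⟨fun _ => ⟨1, by norm_num [halfVec]⟩, fun _ _ => ⟨0, by simp [halfVec]⟩⟩

lemma niemeierD24_le_halfIntLattice : NiemeierD24 ≤ halfIntLattice 24 := by
  refine (AddSubgroup.closure_le _).mpr (Set.union_subset ?_ ?_)
  · exact fun x hx => mem_halfIntLattice_of_isIntVec hx.1
  · exact Set.singleton_subset_iff.mpr (halfVec_mem_halfIntLattice 24)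

lemma quarter_le_mul_self_half_add_int (m : ℤ) : (1 / 4 : ℚ) ≤ (1 / 2 + m) * (1 / 2 + m) := by
  have hm : (0 : ℚ) ≤ m * (m + 1) := by
    exact_mod_cast (show (0 : ℤ) ≤ m * (m + 1) by rcases le_or_gt 0 m with h | h <;> nlinarith)
  nlinarith

section Coset

variable {n : ℕ} {u : Fin n → ℚ}

lemma exists_coord_eq_half_add_int (hu : u ∈ halfIntLattice n) (i : Fin n) :
    ∃ m : ℤ, (halfVec n + 2 • u) i = 1 / 2 + m := by
  obtain ⟨m, hm⟩ := hu.1 i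
  exact ⟨m, by simp [halfVec, hm]⟩

lemma exists_coord_sub_eq_two_mul_int (hu : u ∈ halfIntLattice n) (i j : Fin n) :
    ∃ m : ℤ, (halfVec n + 2 • u) i - (halfVec n + 2 • u) j = 2 * m := by
  obtain ⟨m, hm⟩ := hu.2 i j
  exact ⟨m, by simp only [halfVec, Pi.add_apply, Pi.smul_apply, ← hm]; ring⟩

lemma quarter_le_coord_mul_self (hu : u ∈ halfIntLattice n) (i : Fin n) :
    1 / 4 ≤ (halfVec n + 2 • u) i * (halfVec n + 2 • u) i := by
  obtain ⟨m, hm⟩ := exists_coord_eq_half_add_int hu i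
  rw [hm]
  exact quarter_le_mul_self_half_add_int m

lemma card_div_four_le_qip (hu : u ∈ halfIntLattice n) :
    (n : ℚ) / 4 ≤ qip (halfVec n + 2 • u) (halfVec n + 2 • u) := by
  calc (n : ℚ) / 4 = ∑ _i : Fin n, (1 / 4 : ℚ) := by simp; ring
    _ ≤ _ := Finset.sum_le_sum fun i _ => quarter_le_coord_mul_self hu i

lemma eq_halfVec_or_eq_neg_of_qip_le (hu : u ∈ halfIntLattice n)
    (hle : qip (halfVec n + 2 • u) (halfVec n + 2 • u) ≤ n / 4) :
    halfVec n + 2 • u = halfVec n ∨ halfVec n + 2 • u = -halfVec n := by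
  set z := halfVec n + 2 • u
  have hsq : ∀ i, z i * z i = 1 / 4 := by
    have hsum : ∑ _i : Fin n, (1 / 4 : ℚ) = ∑ i, z i * z i := by
      refine le_antisymm (card_div_four_le_qip hu |>.trans_eq' ?_) (hle.trans_eq ?_) <;>
        simp <;> ring
    exact fun i => ((Finset.sum_eq_sum_iff_of_le fun i _ => quarter_le_coord_mul_self hu i).mp
      hsum i (Finset.mem_univ i)).symm
  have hpm : ∀ i, z i = 1 / 2 ∨ z i = -(1 / 2) := fun i =>
    mul_self_eq_mul_self_iff.mp ((hsq i).trans (by norm_num))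
  have hsame : ∀ i j, z i = 1 / 2 → z j = 1 / 2 := by
    intro i j hi
    refine (hpm j).resolve_right fun hj => ?_
    obtain ⟨m, hm⟩ : ∃ m : ℤ, z i - z j = 2 * m := exists_coord_sub_eq_two_mul_int hu i j
    rw [hi, hj] at hm
    have : (1 : ℤ) = 2 * m := by exact_mod_cast (show (1 : ℚ) = 2 * m by linarith)
    omega
  by_cases hpos : ∃ i, z i = 1 / 2
  · obtain ⟨i, hi⟩ := hpos
    exact Or.inl (funext fun j => hsame i j hi)
  · push Not at hpos
    exact Or.inr (funext fun j => (hpm j).resolve_left (hpos j))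

end Coset

lemma qip_neg_neg {n : ℕ} (x : Fin n → ℚ) : qip (-x) (-x) = qip x x := by
  simp [qip]

/-- `g·g = 6`, `g` is extremal in the Niemeier lattice `D_24`,
and `Min(g + 2L) = {g, -g}`. -/
theorem niemeierD24_glue_extremal :
    qip glueD24 glueD24 = 6 ∧
    (∀ u ∈ NiemeierD24,
      qip glueD24 glueD24 ≤ qip (glueD24 + 2 • u) (glueD24 + 2 • u)) ∧
    {z : Fin 24 → ℚ | (∃ u ∈ NiemeierD24, z = glueD24 + 2 • u) ∧
        ∀ z' : Fin 24 → ℚ, (∃ u ∈ NiemeierD24, z' = glueD24 + 2 • u) →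
          qip z z ≤ qip z' z'} = {glueD24, -glueD24} := by
  have hg : qip glueD24 glueD24 = 6 := by norm_num [qip, glueD24]
  have hextremal :
      ∀ u ∈ NiemeierD24, qip glueD24 glueD24 ≤ qip (glueD24 + 2 • u) (glueD24 + 2 • u) :=
    fun u hu => hg.trans_le <|
      (card_div_four_le_qip (niemeierD24_le_halfIntLattice hu)).trans_eq' (by norm_num)
  have hg_mem : glueD24 ∈ NiemeierD24 := AddSubgroup.subset_closure (Or.inr rfl)
  refine ⟨hg, hextremal, Set.ext fun z => ⟨?_, ?_⟩⟩
  · rintro ⟨⟨u, hu, rfl⟩, hz⟩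
    refine eq_halfVec_or_eq_neg_of_qip_le (niemeierD24_le_halfIntLattice hu) ?_
    exact (hz glueD24 ⟨0, zero_mem _, by simp⟩).trans (hg.trans_le (by norm_num))
  · rintro (rfl | rfl)
    · exact ⟨⟨0, zero_mem _, by simp⟩, fun _ ⟨u, hu, hz'⟩ => hz' ▸ hextremal u hu⟩
    · refine ⟨⟨-glueD24, neg_mem hg_mem, by funext; norm_num [glueD24]⟩, ?_⟩
      rintro _ ⟨u, hu, rfl⟩
      exact (qip_neg_neg glueD24).trans_le (hextremal u hu)
end

section
/- Let v = 5h - e_1 - ⋯ - e_{24} in ℤ^{1,24}. Then v·v = 1, and the orthogonal complement of v contains the roots e_1-e_2, …, e_{23}-e_{24}, and 5h - 2e_1 - e_2 - ⋯ - e_{24}, which span a copy of the negative root lattice -A_24; moreover the complement is an even negative definite unimodular lattice of rank 24. -/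
/-!
The class `v` is characteristic for the odd unimodular lattice `ℤ^{1,24}` (it is congruent to
`(1, …, 1)` mod 2), so `x·x ≡ x·v` mod 2 and `v^⊥` is even. On `v^⊥` the last 24 coordinates
sum to `-5 x_0`, and Cauchy–Schwarz gives `25 x·x ≤ -(x_1² + ⋯ + x_24²)`: `v^⊥` is negative
definite. Solving `x·v = 0` for `x_24` gives the basis `b_k = δ_k - w_k δ_24` of `v^⊥`, with
`w = (5, 1, …, 1)`; its Gram matrix `diag(1, -1, …, -1) - w wᵀ` has determinant
`(-1)·(1 - (25 - 23)) = 1` by the matrix determinant lemma. Finally `x ↦ (5x_0, x_i - x_0)` is an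
isometry from `-A_24` into `v^⊥` sending the simple roots `δ_i - δ_{i+1}` to the listed roots.
-/

/-- The Lorentzian form on `ℤ^{1,24}`, coordinates `(h, e_1, …, e_24)`. -/
def lor (x y : Fin 25 → ℤ) : ℤ := x 0 * y 0 - ∑ i : Fin 24, x i.succ * y i.succ

/-- The class `v = 5h - e_1 - ⋯ - e_24`, in coordinates `(5, -1, …, -1)`. -/
def vA24 : Fin 25 → ℤ := fun i => if i.val = 0 then 5 else -1

/-- The 24 listed roots: `e_1-e_2, …, e_23-e_24` and `5h - 2e_1 - e_2 - ⋯ - e_24`. -/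
def rA24 : Fin 24 → Fin 25 → ℤ := fun k i =>
  if k.val < 23 then
    (if i.val = k.val + 1 then 1 else if i.val = k.val + 2 then -1 else 0)
  else
    (if i.val = 0 then 5 else if i.val = 1 then -2 else -1)

/-- The standard inner product on `ℤ^25`. -/
def zip25 (x y : Fin 25 → ℤ) : ℤ := ∑ i, x i * y i

/-- The root lattice `A_24 = {x ∈ ℤ^25 : Σ x_i = 0}`. -/
def A24Z : Set (Fin 25 → ℤ) := {x | (∑ i, x i) = 0}

open Finset

section ConsecutiveDiff

variable (R : Type*) [CommRing R] (n : ℕ)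

def consecutiveDiff (k : Fin n) : Fin (n + 1) → R :=
  Pi.single k.castSucc 1 - Pi.single k.succ 1

variable {R n}

lemma single_sub_single_last_mem_span_consecutiveDiff (j : Fin (n + 1)) :
    (Pi.single j 1 - Pi.single (Fin.last n) 1 : Fin (n + 1) → R) ∈
      Submodule.span R (Set.range (consecutiveDiff R n)) := by
  induction j using Fin.reverseInduction with
  | last => simp
  | cast k ih =>
    have h : (Pi.single k.castSucc 1 - Pi.single (Fin.last n) 1 : Fin (n + 1) → R) =
        consecutiveDiff R n k + (Pi.single k.succ 1 - Pi.single (Fin.last n) 1) := by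
      simp [consecutiveDiff]
    rw [h]
    exact add_mem (Submodule.subset_span ⟨k, rfl⟩) ih

lemma mem_span_consecutiveDiff_of_sum_eq_zero {x : Fin (n + 1) → R} (hx : ∑ i, x i = 0) :
    x ∈ Submodule.span R (Set.range (consecutiveDiff R n)) := by
  have h : x = ∑ j, x j • (Pi.single j 1 - Pi.single (Fin.last n) 1 : Fin (n + 1) → R) := by
    simp only [smul_sub, sum_sub_distrib, ← sum_smul, hx, zero_smul, sub_zero]
    exact pi_eq_sum_univ' x
  rw [h]
  exact Submodule.sum_smul_mem _ _ fun j _ => single_sub_single_last_mem_span_consecutiveDiff j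

end ConsecutiveDiff

open Matrix in
theorem Matrix.det_diagonal_sub_vecMulVec {ι R : Type*} [Fintype ι] [DecidableEq ι] [CommRing R]
    {ε : ι → R} (hε : ∀ i, ε i * ε i = 1) (u v : ι → R) :
    (diagonal ε - vecMulVec u v).det = (∏ i, ε i) * (1 - ∑ i, ε i * u i * v i) := by
  have h : diagonal ε - vecMulVec u v =
      diagonal ε * (1 + replicateCol Unit (-(ε * u)) * replicateRow Unit v) := by
    ext i j
    rcases eq_or_ne i j with rfl | hij
    · simp [← vecMulVec_eq, vecMulVec_apply]
      linear_combination (u i * v i) * hε i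
    · simp [← vecMulVec_eq, vecMulVec_apply, hij]
      linear_combination (-(u i * v j)) * hε i
  rw [h, det_mul, det_diagonal, det_one_add_replicateCol_mul_replicateRow]
  simp only [dotProduct, Pi.neg_apply, Pi.mul_apply, mul_neg, sum_neg_distrib, ← sub_eq_add_neg]
  congr 2
  exact sum_congr rfl fun i _ => by ring

lemma lor_vA24 (x : Fin 25 → ℤ) : lor x vA24 = 5 * x 0 + ∑ i : Fin 24, x i.succ := by
  simp [lor, vA24, Fin.val_succ]
  ring

lemma even_lor_self_sub_lor_vA24 (x : Fin 25 → ℤ) : Even (lor x x - lor x vA24) := by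
  have h : lor x x - lor x vA24 =
      x 0 * (x 0 - 1) - ∑ i : Fin 24, x i.succ * (x i.succ + 1) - 2 * (2 * x 0) := by
    rw [lor_vA24, lor]
    simp only [mul_add, mul_one, sum_add_distrib]
    ring
  rw [h]
  exact ((Int.even_mul_pred_self _).sub (even_sum _ fun i _ => Int.even_mul_succ_self _)).sub
    (even_two_mul _)

lemma mul_lor_self_le_of_lor_vA24_eq_zero {x : Fin 25 → ℤ} (hx : lor x vA24 = 0) :
    25 * lor x x ≤ -∑ i : Fin 24, x i.succ ^ 2 := by
  have hsum : ∑ i : Fin 24, x i.succ = -(5 * x 0) := by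
    rw [lor_vA24] at hx
    linarith
  have hcs := sq_sum_le_card_mul_sum_sq (s := univ) (f := fun i : Fin 24 => x i.succ)
  rw [hsum, card_univ, Fintype.card_fin] at hcs
  simp only [lor, ← sq]
  push_cast at hcs
  linarith

lemma lor_self_neg_of_lor_vA24_eq_zero {x : Fin 25 → ℤ} (hx : lor x vA24 = 0) (hne : x ≠ 0) :
    lor x x < 0 := by
  by_contra! hnn
  have hsq : ∀ i ∈ univ, 0 ≤ x (Fin.succ i) ^ 2 := fun i _ => sq_nonneg _
  have hS : ∑ i : Fin 24, x i.succ ^ 2 = 0 :=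
    le_antisymm (by linarith [mul_lor_self_le_of_lor_vA24_eq_zero hx]) (sum_nonneg hsq)
  have hsucc (i : Fin 24) : x i.succ = 0 :=
    pow_eq_zero_iff two_ne_zero |>.1 ((sum_eq_zero_iff_of_nonneg hsq).1 hS i (mem_univ i))
  have h0 : x 0 = 0 := by
    simp only [lor_vA24, hsucc, sum_const_zero] at hx
    linarith
  exact hne (funext fun j => Fin.cases h0 hsucc j)

lemma mem_A24Z_iff (x : Fin 25 → ℤ) : x ∈ A24Z ↔ x 0 + ∑ i : Fin 24, x i.succ = 0 := by
  rw [← Fin.sum_univ_succ]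
  rfl

def embA24 : (Fin 25 → ℤ) →ₗ[ℤ] (Fin 25 → ℤ) where
  toFun x := Fin.cons (5 * x 0) fun i => x i.succ - x 0
  map_add' x y := by ext j; cases j using Fin.cases <;> simp <;> ring
  map_smul' a x := by ext j; cases j using Fin.cases <;> simp <;> ring

@[simp] lemma embA24_apply_zero (x : Fin 25 → ℤ) : embA24 x 0 = 5 * x 0 := rfl

@[simp] lemma embA24_apply_succ (x : Fin 25 → ℤ) (i : Fin 24) :
    embA24 x i.succ = x i.succ - x 0 := rfl

lemma embA24_injective : Function.Injective embA24 := by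
  intro x y h
  have h0 : x 0 = y 0 := by simpa using congrFun h 0
  refine funext fun j => Fin.cases h0 (fun i => ?_) j
  simpa [h0] using congrFun h i.succ

lemma lor_embA24_vA24 {x : Fin 25 → ℤ} (hx : x ∈ A24Z) : lor (embA24 x) vA24 = 0 := by
  rw [mem_A24Z_iff] at hx
  simp only [lor_vA24, embA24_apply_zero, embA24_apply_succ, sum_sub_distrib, sum_const,
    card_univ, Fintype.card_fin, nsmul_eq_mul]
  push_cast
  linarith

lemma lor_embA24 {x y : Fin 25 → ℤ} (hx : x ∈ A24Z) (hy : y ∈ A24Z) :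
    lor (embA24 x) (embA24 y) = -zip25 x y := by
  rw [mem_A24Z_iff] at hx hy
  have h : ∑ i : Fin 24, (x i.succ - x 0) * (y i.succ - y 0) = ∑ i : Fin 24, x i.succ * y i.succ
      - x 0 * ∑ i : Fin 24, y i.succ - y 0 * ∑ i : Fin 24, x i.succ + 24 * (x 0 * y 0) := by
    simp only [sub_mul, mul_sub, sum_sub_distrib, ← mul_sum, ← sum_mul, sum_const, card_univ,
      Fintype.card_fin, nsmul_eq_mul]
    push_cast
    ring
  simp only [lor, zip25, Fin.sum_univ_succ (fun i => x i * y i), embA24_apply_zero,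
    embA24_apply_succ, h]
  linear_combination x 0 * hy + y 0 * hx

/-- `k - 1` wraps around in `Fin 24`: the first simple root goes to the extra root `rA24 23`. -/
lemma embA24_consecutiveDiff : ∀ k, embA24 (consecutiveDiff ℤ 24 k) = rA24 (k - 1) := by
  decide

lemma embA24_mem_span_rA24 {x : Fin 25 → ℤ} (hx : x ∈ A24Z) :
    embA24 x ∈ Submodule.span ℤ (Set.range rA24) := by
  have hmap : (Submodule.span ℤ (Set.range (consecutiveDiff ℤ 24))).map embA24 ≤
      Submodule.span ℤ (Set.range rA24) := by
    rw [Submodule.map_span, Submodule.span_le]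
    rintro _ ⟨_, ⟨k, rfl⟩, rfl⟩
    exact Submodule.subset_span ⟨k - 1, (embA24_consecutiveDiff k).symm⟩
  exact hmap (Submodule.mem_map_of_mem (mem_span_consecutiveDiff_of_sum_eq_zero hx))

def orthWeight (k : Fin 24) : ℤ := if k = 0 then 5 else 1

def orthBasis (k : Fin 24) : Fin 25 → ℤ :=
  Pi.single k.castSucc 1 - Pi.single (Fin.last 24) (orthWeight k)

lemma lor_orthBasis_vA24 : ∀ k, lor (orthBasis k) vA24 = 0 := by
  decide

lemma lor_vA24_eq_sum_orthWeight (x : Fin 25 → ℤ) :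
    lor x vA24 = ∑ k, orthWeight k * x k.castSucc + x (Fin.last 24) := by
  rw [lor_vA24, Fin.sum_univ_succ (fun k => orthWeight k * x k.castSucc),
    Fin.sum_univ_castSucc (fun i => x i.succ)]
  simp only [orthWeight, Fin.succ_ne_zero, if_true, if_false, one_mul, Fin.succ_last,
    Fin.succ_castSucc, Fin.castSucc_zero]
  ring

lemma orthBasis_apply_castSucc (k j : Fin 24) :
    orthBasis k j.castSucc = if j = k then 1 else 0 := by
  simp only [orthBasis, Pi.sub_apply, Pi.single_apply, Fin.castSucc_inj,
    if_neg (Fin.castSucc_ne_last j), sub_zero]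

lemma orthBasis_apply_last (k : Fin 24) : orthBasis k (Fin.last 24) = -orthWeight k := by
  simp only [orthBasis, Pi.sub_apply, Pi.single_apply, if_neg (Fin.castSucc_ne_last k).symm,
    if_true, zero_sub]

lemma sum_smul_orthBasis_castSucc (c : Fin 24 → ℤ) (j : Fin 24) :
    (∑ k, c k • orthBasis k) j.castSucc = c j := by
  simp [orthBasis_apply_castSucc]

lemma sum_smul_orthBasis_last (c : Fin 24 → ℤ) :
    (∑ k, c k • orthBasis k) (Fin.last 24) = -∑ k, orthWeight k * c k := by
  simp only [Finset.sum_apply, Pi.smul_apply, orthBasis_apply_last, smul_eq_mul, mul_neg,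
    sum_neg_distrib, mul_comm]

lemma existsUnique_eq_sum_smul_orthBasis {x : Fin 25 → ℤ} (hx : lor x vA24 = 0) :
    ∃! c : Fin 24 → ℤ, x = ∑ k, c k • orthBasis k := by
  refine ⟨fun k => x k.castSucc, ?_, fun c hc => funext fun k => ?_⟩
  · funext j
    cases j using Fin.lastCases with
    | last =>
      rw [sum_smul_orthBasis_last]
      linarith [lor_vA24_eq_sum_orthWeight x]
    | cast i => rw [sum_smul_orthBasis_castSucc]
  · rw [hc, sum_smul_orthBasis_castSucc]

lemma gram_orthBasis : (Matrix.of fun k l => lor (orthBasis k) (orthBasis l)) =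
    Matrix.diagonal (fun k => if k = 0 then 1 else -1) -
      Matrix.vecMulVec orthWeight orthWeight := by
  decide

lemma det_gram_orthBasis : (Matrix.of fun k l => lor (orthBasis k) (orthBasis l)).det = 1 := by
  rw [gram_orthBasis, Matrix.det_diagonal_sub_vecMulVec (fun k => by split_ifs <;> rfl)]
  decide

/-- `v·v = 1`; the orthogonal complement of `v` contains the listed
roots, which span a copy of `-A_24`; and the complement is an even negative
definite unimodular lattice of rank 24. -/
theorem complement_of_5_1s :
    lor vA24 vA24 = 1 ∧
    (∀ k, lor (rA24 k) vA24 = 0 ∧ lor (rA24 k) (rA24 k) = -2) ∧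
    (∃ f : (Fin 25 → ℤ) →ₗ[ℤ] (Fin 25 → ℤ),
      Set.InjOn f A24Z ∧
      (∀ x ∈ A24Z, lor (f x) vA24 = 0) ∧
      (∀ x ∈ A24Z, ∀ y ∈ A24Z, lor (f x) (f y) = -(zip25 x y)) ∧
      (∀ x ∈ A24Z, f x ∈ Submodule.span ℤ (Set.range rA24))) ∧
    (∀ x : Fin 25 → ℤ, lor x vA24 = 0 → Even (lor x x)) ∧
    (∀ x : Fin 25 → ℤ, lor x vA24 = 0 → x ≠ 0 → lor x x < 0) ∧
    (∃ b : Fin 24 → (Fin 25 → ℤ),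
      (∀ k, lor (b k) vA24 = 0) ∧
      (∀ x : Fin 25 → ℤ, lor x vA24 = 0 → ∃! c : Fin 24 → ℤ, x = ∑ k, c k • b k) ∧
      (Matrix.of fun k l => lor (b k) (b l)).det.natAbs = 1) := by
  refine ⟨by decide, by decide, ?_, fun x hx => ?_, fun _ hx => lor_self_neg_of_lor_vA24_eq_zero hx,
    ⟨orthBasis, lor_orthBasis_vA24, fun _ hx => existsUnique_eq_sum_smul_orthBasis hx, ?_⟩⟩
  · exact ⟨embA24, embA24_injective.injOn, fun _ hx => lor_embA24_vA24 hx,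
      fun _ hx _ hy => lor_embA24 hx hy, fun _ hx => embA24_mem_span_rA24 hx⟩
  · simpa [hx] using even_lor_self_sub_lor_vA24 x
  · simp [det_gram_orthBasis]
end
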